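/- In the Hopf algebra of (undecorated) rooted trees H_rt with grafting operator B_+, the elements defined by c_0 = 1 and c_n = B_+( Σ_{k_1+k_2 = n−1, k_i ≥ 0} c_{k_1} c_{k_2} ) (i.e. the solution of the Dyson–Schwinger equation X = 1 + λ B_+(X²)) generate a Hopf subalgebra: Δ(c_n) = Σ_{k=0}^{n} P_k^n ⊗ c_{n−k}, where P_k^n = Σ_{l_1+⋯+l_{k+1} = n−k} c_{l_1} ⋯ c_{l_{k+1}}. -/

import Mathlib

/-!
With `C = Σ cₙ xⁿ`, the polynomials of the statement are coefficients of powers of `C`,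
`Pₖⁿ = [x^(n-k)] C^(k+1)`, and the recursion reads `c_(n+1) = B₊([xⁿ] C²)`. By strong induction,
the cocycle property reduces `Δ(c_(n+1))` to `Δ([xⁿ] C²) = Σ Δ(c_a) Δ(c_b)`. Expanding with the
induction hypothesis and regrouping the fourfold sum by the right-hand tensor factor `c_p c_q`,
the left-hand factors recombine through `C^(p+1) C^(q+1) = C^(p+q+2)`.
-/

open TensorProduct

namespace Finset.HasAntidiagonal

variable {A M : Type*} [AddCommMonoid A] [HasAntidiagonal A] [AddCommMonoid M]

theorem sum_antidiagonal_antidiagonal_comm (m : A) (f : A → A → A → A → M) :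
    ∑ x ∈ antidiagonal m, ∑ y ∈ antidiagonal x.1, ∑ z ∈ antidiagonal x.2, f y.1 y.2 z.1 z.2 =
      ∑ x ∈ antidiagonal m, ∑ y ∈ antidiagonal x.1, ∑ z ∈ antidiagonal x.2, f y.1 z.1 y.2 z.2 := by
  simp only [← sum_product']
  rw [sum_sigma', sum_sigma']
  let transpose : (_ : A × A) × (A × A) × (A × A) → (_ : A × A) × (A × A) × (A × A) :=
    fun ⟨_, (p, u), (q, v)⟩ => ⟨(p + q, u + v), (p, q), (u, v)⟩
  refine sum_nbij' transpose transpose ?_ ?_ ?_ ?_ fun _ _ => rfl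
  all_goals
    rintro ⟨⟨a, b⟩, ⟨p, u⟩, ⟨q, v⟩⟩ h
    simp only [mem_sigma, mem_product, mem_antidiagonal, transpose] at h ⊢
  · obtain ⟨rfl, rfl, rfl⟩ := h; simp only [add_add_add_comm, and_self]
  · obtain ⟨rfl, rfl, rfl⟩ := h; simp only [add_add_add_comm, and_self]
  · obtain ⟨-, rfl, rfl⟩ := h; rfl
  · obtain ⟨-, rfl, rfl⟩ := h; rfl

end Finset.HasAntidiagonal

namespace PowerSeries

theorem coeff_pow_eq_sum_antidiagonalTuple {R : Type*} [CommSemiring R] (φ : R⟦X⟧) (k n : ℕ) :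
    coeff n (φ ^ k) = ∑ l ∈ Finset.Nat.antidiagonalTuple k n, ∏ i, coeff (l i) φ := by
  have := coeff_prod (fun _ : Fin k => φ) n Finset.univ
  simp only [Finset.prod_const, Finset.card_univ, Fintype.card_fin] at this
  rw [this, ← Finset.piAntidiag_univ_fin_eq_antidiagonalTuple, Finset.finsuppAntidiag,
    Finset.sum_map, ← Finset.sum_attach (Finset.piAntidiag _ _)]
  rfl

end PowerSeries

open Finset.HasAntidiagonal PowerSeries

section DysonSchwinger

variable {K H : Type*} [CommSemiring K] [Semiring H] [Bialgebra K H]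

def IsHochschildOneCocycle (B : H →ₗ[K] H) : Prop :=
  ∀ x, Coalgebra.comul (R := K) (B x) = B x ⊗ₜ[K] 1 + B.lTensor H (Coalgebra.comul x)

theorem comul_coeff_sq_of_comul_eq_sum {c : ℕ → H} {m : ℕ}
    (hc : ∀ a ≤ m, Coalgebra.comul (R := K) (c a) =
      ∑ y ∈ antidiagonal a, coeff y.2 (mk c ^ (y.1 + 1)) ⊗ₜ[K] c y.1) :
    Coalgebra.comul (R := K) (coeff m (mk c ^ 2)) =
      ∑ x ∈ antidiagonal m, coeff x.2 (mk c ^ (x.1 + 2)) ⊗ₜ[K] coeff x.1 (mk c ^ 2) := by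
  set C := mk c
  calc Coalgebra.comul (R := K) (coeff m (C ^ 2))
      = ∑ x ∈ antidiagonal m, Coalgebra.comul (R := K) (c x.1) * Coalgebra.comul (c x.2) := by
        simp only [sq, coeff_mul, map_sum, coeff_mk, C, Bialgebra.comul_mul]
    _ = ∑ x ∈ antidiagonal m, ∑ y ∈ antidiagonal x.1, ∑ z ∈ antidiagonal x.2,
          (coeff y.2 (C ^ (y.1 + 1)) * coeff z.2 (C ^ (z.1 + 1))) ⊗ₜ[K] (c y.1 * c z.1) := by
        refine Finset.sum_congr rfl fun x hx => ?_
        have hsum := mem_antidiagonal.mp hx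
        rw [hc x.1 (by omega), hc x.2 (by omega), Finset.sum_mul_sum]
        simp only [Algebra.TensorProduct.tmul_mul_tmul]
    _ = ∑ x ∈ antidiagonal m, ∑ y ∈ antidiagonal x.1, ∑ z ∈ antidiagonal x.2,
          (coeff z.1 (C ^ (y.1 + 1)) * coeff z.2 (C ^ (y.2 + 1))) ⊗ₜ[K] (c y.1 * c y.2) :=
        sum_antidiagonal_antidiagonal_comm m
          fun p u q v => (coeff u (C ^ (p + 1)) * coeff v (C ^ (q + 1))) ⊗ₜ[K] (c p * c q)
    _ = ∑ x ∈ antidiagonal m, ∑ y ∈ antidiagonal x.1,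
          coeff x.2 (C ^ (x.1 + 2)) ⊗ₜ[K] (c y.1 * c y.2) := by
        refine Finset.sum_congr rfl fun x _ => Finset.sum_congr rfl fun y hy => ?_
        rw [← sum_tmul, ← coeff_mul, ← pow_add, ← mem_antidiagonal.mp hy, add_add_add_comm]
    _ = ∑ x ∈ antidiagonal m, coeff x.2 (C ^ (x.1 + 2)) ⊗ₜ[K] coeff x.1 (C ^ 2) := by
        simp only [← tmul_sum, sq, coeff_mul, coeff_mk, C]

theorem comul_eq_sum_antidiagonal_of_isHochschildOneCocycle {B : H →ₗ[K] H}
    (hB : IsHochschildOneCocycle B) {c : ℕ → H} (hc0 : c 0 = 1)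
    (hrec : ∀ n, c (n + 1) = B (coeff n (mk c ^ 2))) (n : ℕ) :
    Coalgebra.comul (R := K) (c n) =
      ∑ y ∈ antidiagonal n, coeff y.2 (mk c ^ (y.1 + 1)) ⊗ₜ[K] c y.1 := by
  induction n using Nat.strong_induction_on with
  | _ n ih =>
  cases n with
  | zero => simp [hc0, Algebra.TensorProduct.one_def]
  | succ m =>
    rw [hrec, hB, comul_coeff_sq_of_comul_eq_sum fun a ha => ih a (by omega), map_sum,
      Finset.Nat.sum_antidiagonal_succ]
    simp only [LinearMap.lTensor_tmul, ← hrec, hc0, zero_add, pow_one, coeff_mk, add_assoc,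
      Nat.reduceAdd]

end DysonSchwinger

/-- The solution `c₀ = 1`, `cₙ = B₊(Σ_{i+j=n−1} cᵢ cⱼ)` of the Dyson–Schwinger
equation `X = 1 + λ B₊(X²)` (for a Hochschild 1-cocycle `B₊`, e.g. grafting on
rooted trees) generates a Hopf subalgebra:
`Δ(cₙ) = Σ_{k=0}^{n} Pₖⁿ ⊗ c_k` with
`Pₖⁿ = Σ_{l₁+⋯+l_{k+1}=n−k} c_{l₁}⋯c_{l_{k+1}}`. -/
theorem dyson_schwinger_hopf_subalgebra
    (K H : Type*) [Field K] [CommRing H] [Bialgebra K H]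
    (B : H →ₗ[K] H)
    (hB : ∀ x : H, Coalgebra.comul (R := K) (B x)
        = B x ⊗ₜ[K] (1 : H) + LinearMap.lTensor H B (Coalgebra.comul (R := K) x))
    (c : ℕ → H) (hc0 : c 0 = 1)
    (hrec : ∀ n : ℕ, 1 ≤ n →
      c n = B (∑ p ∈ Finset.HasAntidiagonal.antidiagonal (n - 1), c p.1 * c p.2)) :
    ∀ n : ℕ, Coalgebra.comul (R := K) (c n) =
      ∑ k ∈ Finset.range (n + 1),
        (∑ l ∈ Finset.Nat.antidiagonalTuple (k + 1) (n - k), ∏ i, c (l i)) ⊗ₜ[K] c k := by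
  have hrec_coeff (n : ℕ) : c (n + 1) = B (coeff n (mk c ^ 2)) := by
    rw [hrec (n + 1) n.succ_pos, Nat.add_sub_cancel, sq, coeff_mul]
    simp only [coeff_mk]
  intro n
  rw [comul_eq_sum_antidiagonal_of_isHochschildOneCocycle hB hc0 hrec_coeff,
    Finset.Nat.sum_antidiagonal_eq_sum_range_succ fun k i => coeff i (mk c ^ (k + 1)) ⊗ₜ[K] c k]
  simp only [coeff_pow_eq_sum_antidiagonalTuple, coeff_mk]
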